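/- arXiv:1403.5584 — 5 statements merged into one kernel-verified Lean document; each statement's English description precedes it below -/
import Mathlib

section
/- Let B be a group, let H be a hyper-B group, and let U be a locally finite group (every finitely generated subgroup of U is finite). Then the group H ≀^{f.v.} U of pairs (φ, u) in the unrestricted wreath product H^U ⋊ U for which φ : U → H takes only finitely many values is a hyper-B group. -/
/-- `G` is a hyper-`B` group: every finite subset of `G` is contained in a subgroup `K`
having a normal subgroup `N` of finite index isomorphic to a finite power of `B`. -/
def IsHyper (B : Type*) [Group B] (G : Type*) [Group G] : Prop :=
  ∀ F : Finset G, ∃ K : Subgroup G, (F : Set G) ⊆ K ∧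
    ∃ N : Subgroup K, N.Normal ∧ N.FiniteIndex ∧ ∃ n : ℕ, Nonempty (N ≃* (Fin n → B))

/-- The action of `U` on `U → H` by right translation: `(u · φ) x = φ (x * u)`. -/
def translationAction (H U : Type*) [Group H] [Group U] : U →* MulAut (U → H) where
  toFun u :=
    { toFun := fun φ x => φ (x * u)
      invFun := fun φ x => φ (x * u⁻¹)
      left_inv := fun φ => funext fun x => by show φ (x * u⁻¹ * u) = φ x; rw [mul_assoc, inv_mul_cancel, mul_one]
      right_inv := fun φ => funext fun x => by show φ (x * u * u⁻¹) = φ x; rw [mul_assoc, mul_inv_cancel, mul_one]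
      map_mul' := fun φ ψ => rfl }
  map_one' := by
    ext φ x
    simp
  map_mul' u v := by
    ext φ x
    simp [mul_assoc]

/-- The subgroup `H ≀^{f.v.} U` of the unrestricted wreath product `H^U ⋊ U`
consisting of the pairs `(φ, u)` whose function `φ : U → H` takes only finitely
many values. -/
def fvWreath (H U : Type*) [Group H] [Group U] :
    Subgroup (SemidirectProduct (U → H) U (translationAction H U)) where
  carrier := {p | (Set.range p.left).Finite}
  one_mem' := by
    refine (Set.finite_singleton (1 : H)).subset ?_
    rintro _ ⟨x, rfl⟩
    rw [SemidirectProduct.one_left]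
    rfl
  mul_mem' := by
    intro a b ha hb
    refine ((Set.Finite.image2 (· * ·) ha hb)).subset ?_
    rintro _ ⟨x, rfl⟩
    rw [SemidirectProduct.mul_left]
    exact Set.mem_image2_of_mem ⟨x, rfl⟩ ⟨x * a.right, rfl⟩
  inv_mem' := by
    intro a ha
    refine (ha.image (·⁻¹)).subset ?_
    rintro _ ⟨x, rfl⟩
    rw [SemidirectProduct.inv_left]
    exact ⟨a.left (x * a.right⁻¹), ⟨x * a.right⁻¹, rfl⟩, rfl⟩

/-! Given finitely many elements `(φᵢ, uᵢ)` of `H ≀^{f.v.} U`, the `uᵢ` generate a finite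
subgroup `T ≤ U`, and the finitely many values of the `φᵢ` lie in a subgroup `K ≤ H` with a normal
subgroup `N ≅ B^m` of finite index. Partition `U` according to the fingerprint
`x ↦ (φᵢ (x t))ᵢ,ₜ` with `t ∈ T`: there are finitely many blocks, right multiplication by `T`
permutes them, and every `φᵢ` is constant on them. The pairs `(φ, u)` with `u ∈ T` and
`φ : U → K` constant on blocks form a subgroup (the permutational wreath product of `K` by `T`
acting on the blocks) containing the given elements. Its kernel under reduction modulo `N`,
whose image is finite because `K ⧸ N`, `T` and the set of blocks are, consists of the
block-constant functions into `N`, so it is isomorphic to `N ^ #blocks ≅ B ^ (m * #blocks)`. -/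

open Function

def IsVirtuallyPower (B G : Type*) [Group B] [Group G] : Prop :=
  ∃ N : Subgroup G, N.Normal ∧ N.FiniteIndex ∧ ∃ n : ℕ, Nonempty (N ≃* (Fin n → B))

theorem IsVirtuallyPower.of_mulEquiv {B G G' : Type*} [Group B] [Group G] [Group G']
    (e : G ≃* G') (h : IsVirtuallyPower B G) : IsVirtuallyPower B G' := by
  obtain ⟨N, hN, hNfi, n, ⟨eN⟩⟩ := h
  refine ⟨N.map (e : G →* G'), hN.map _ e.surjective, ?_, n, ⟨(e.subgroupMap N).symm.trans eN⟩⟩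
  exact ⟨by rw [Subgroup.index_map_equiv]; exact hNfi.index_ne_zero⟩

theorem exists_mulEquiv_pi_fin (B ι : Type*) [Group B] [Finite ι] (m : ℕ) :
    ∃ n : ℕ, Nonempty ((ι → Fin m → B) ≃* (Fin n → B)) := by
  let e : Fin (Nat.card ι * m) ≃ ι × Fin m :=
    finProdFinEquiv.symm.trans ((Finite.equivFin ι).symm.prodCongr (.refl _))
  exact ⟨_, ⟨MulEquiv.mk' ((Equiv.curry ι (Fin m) B).symm.trans (e.symm.arrowCongr (.refl B)))
    fun _ _ => rfl⟩⟩

abbrev UnrestrictedWreath (H U : Type*) [Group H] [Group U] :=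
  SemidirectProduct (U → H) U (translationAction H U)

def Setoid.IsRightInvariant {U : Type*} [Group U] (s : Setoid U) (T : Subgroup U) : Prop :=
  ∀ u ∈ T, ∀ ⦃x y : U⦄, s x y → s (x * u) (y * u)

theorem Setoid.exists_isRightInvariant_of_finite_range {U X ι : Type*} [Group U] [Finite ι]
    (φ : ι → U → X) (hφ : ∀ i, (Set.range (φ i)).Finite) (T : Subgroup U) [Finite T] :
    ∃ s : Setoid U, Finite (Quotient s) ∧ s.IsRightInvariant T ∧
      ∀ i ⦃x y⦄, s x y → φ i x = φ i y := by
  let fingerprint : U → ι × T → X := fun x it => φ it.1 (x * it.2)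
  refine ⟨Setoid.ker fingerprint, ?_, ?_, fun i x y hxy => ?_⟩
  · have : (Set.range fingerprint).Finite :=
      (Set.Finite.pi (t := fun it : ι × T => Set.range (φ it.1)) fun it => hφ it.1).subset
        (by rintro _ ⟨x, rfl⟩ it -; exact ⟨x * it.2, rfl⟩)
    have := this.to_subtype
    exact .of_equiv _ (Setoid.quotientKerEquivRange fingerprint).symm
  · intro u hu x y hxy
    funext ⟨i, t⟩
    simpa [fingerprint, mul_assoc] using congrFun hxy (i, ⟨u, hu⟩ * t)
  · simpa [fingerprint] using congrFun hxy (i, 1)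

namespace UnrestrictedWreath

section Map

variable {H H' U : Type*} [Group H] [Group H'] [Group U]

@[simp]
theorem left_mul (a b : UnrestrictedWreath H U) (x : U) :
    (a * b).left x = a.left x * b.left (x * a.right) := rfl

@[simp]
theorem left_inv (a : UnrestrictedWreath H U) (x : U) :
    a⁻¹.left x = (a.left (x * a.right⁻¹))⁻¹ := rfl

def map (f : H →* H') : UnrestrictedWreath H U →* UnrestrictedWreath H' U :=
  SemidirectProduct.map (f.compLeft U) (MonoidHom.id U) fun _ => rfl

@[simp]
theorem map_left (f : H →* H') (g : UnrestrictedWreath H U) (x : U) :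
    (map f g).left x = f (g.left x) := rfl

@[simp]
theorem map_right (f : H →* H') (g : UnrestrictedWreath H U) : (map f g).right = g.right := rfl

theorem map_injective {f : H →* H'} (hf : Injective f) :
    Injective (map f : UnrestrictedWreath H U → UnrestrictedWreath H' U) := by
  intro a b hab
  simp only [SemidirectProduct.ext_iff, funext_iff, map_left, map_right] at hab
  exact SemidirectProduct.ext (funext fun x => hf (hab.1 x)) hab.2

end Map

section Blocks

variable (H : Type*) {H' U : Type*} [Group H] [Group H'] [Group U]
  (s : Setoid U) (T : Subgroup U) (hs : s.IsRightInvariant T)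

def blockSubgroup : Subgroup (UnrestrictedWreath H U) where
  carrier := {g | g.right ∈ T ∧ ∀ ⦃x y⦄, s x y → g.left x = g.left y}
  one_mem' := ⟨T.one_mem, fun _ _ _ => rfl⟩
  mul_mem' := by
    rintro a b ⟨haT, ha⟩ ⟨hbT, hb⟩
    refine ⟨T.mul_mem haT hbT, fun x y hxy => ?_⟩
    simp only [left_mul, ha hxy, hb (hs _ haT hxy)]
  inv_mem' := by
    rintro a ⟨haT, ha⟩
    refine ⟨T.inv_mem haT, fun x y hxy => ?_⟩
    simp only [left_inv, ha (hs _ (T.inv_mem haT) hxy)]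

variable {H s T hs}

theorem blockSubgroup_map_le (f : H →* H') :
    (blockSubgroup H s T hs).map (map f) ≤ blockSubgroup H' s T hs := by
  rintro _ ⟨g, ⟨hgT, hg⟩, rfl⟩
  exact ⟨hgT, fun x y hxy => congrArg f (hg hxy)⟩

theorem mem_map_subtype_blockSubgroup {K : Subgroup H} {g : UnrestrictedWreath H U}
    (hT : g.right ∈ T) (hK : ∀ x, g.left x ∈ K) (hg : ∀ ⦃x y⦄, s x y → g.left x = g.left y) :
    g ∈ (blockSubgroup K s T hs).map (map K.subtype) :=
  ⟨⟨fun x => ⟨g.left x, hK x⟩, g.right⟩, ⟨hT, fun _ _ hxy => Subtype.ext (hg hxy)⟩, rfl⟩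

theorem blockSubgroup_le_fvWreath [Finite (Quotient s)] :
    blockSubgroup H s T hs ≤ fvWreath H U := by
  rintro g ⟨-, hg⟩
  refine (Set.finite_range fun q : Quotient s => g.left q.out).subset ?_
  rintro _ ⟨x, rfl⟩
  exact ⟨⟦x⟧, hg (Quotient.mk_out x)⟩

instance [Finite H] [Finite (Quotient s)] [Finite T] : Finite (blockSubgroup H s T hs) := by
  refine Finite.of_injective
    (fun g => (fun q : Quotient s => g.1.left q.out, (⟨g.1.right, g.2.1⟩ : T))) ?_
  intro a b hab
  simp only [Prod.mk.injEq, Subtype.mk.injEq] at hab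
  refine Subtype.ext (SemidirectProduct.ext (funext fun x => ?_) hab.2)
  have hx : s ⟦x⟧.out x := Quotient.mk_out x
  rw [← a.2.2 hx, ← b.2.2 hx]
  exact congrFun hab.1 ⟦x⟧

def blockPiEmbedding (N : Subgroup H) : (Quotient s → N) →* blockSubgroup H s T hs :=
  MonoidHom.mk' (fun f => ⟨SemidirectProduct.inl fun x => (f ⟦x⟧ : H), T.one_mem,
      fun x y hxy => by simp only [SemidirectProduct.left_inl, Quotient.sound hxy]⟩)
    fun f g => by ext1; simp only [Subgroup.coe_mul, ← map_mul]; rfl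

theorem blockPiEmbedding_injective (N : Subgroup H) :
    Injective (blockPiEmbedding (s := s) (hs := hs) N) := by
  intro f g hfg
  funext q
  induction q using Quotient.ind with
  | _ x => exact Subtype.ext (congrFun (congrArg (fun g => g.1.left) hfg) x)

theorem range_blockPiEmbedding (N : Subgroup H) [N.Normal] :
    (blockPiEmbedding (s := s) (hs := hs) N).range =
      ((map (QuotientGroup.mk' N)).domRestrict (blockSubgroup H s T hs)).ker := by
  ext g
  simp only [MonoidHom.mem_ker, MonoidHom.domRestrict_apply, SemidirectProduct.ext_iff,
    funext_iff, map_left, map_right, SemidirectProduct.one_left, SemidirectProduct.one_right,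
    Pi.one_apply, QuotientGroup.mk'_apply, QuotientGroup.eq_one_iff]
  constructor
  · rintro ⟨f, rfl⟩
    exact ⟨fun x => (f ⟦x⟧).2, rfl⟩
  · rintro ⟨hN, h1⟩
    refine ⟨fun q => ⟨g.1.left q.out, hN _⟩, Subtype.ext (SemidirectProduct.ext ?_ h1.symm)⟩
    exact funext fun x => g.2.2 (Quotient.mk_out x)

theorem isVirtuallyPower_blockSubgroup {B : Type*} [Group B] (hH : IsVirtuallyPower B H)
    [Finite (Quotient s)] [Finite T] : IsVirtuallyPower B (blockSubgroup H s T hs) := by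
  obtain ⟨N, hN, hNfi, m, ⟨eN⟩⟩ := hH
  let ρ := (map (QuotientGroup.mk' N)).domRestrict (blockSubgroup H s T hs)
  have : Finite ρ.range := by
    rw [MonoidHom.domRestrict_range]
    exact Finite.of_injective _ (Subgroup.inclusion_injective (blockSubgroup_map_le _))
  obtain ⟨n, ⟨e⟩⟩ := exists_mulEquiv_pi_fin B (Quotient s) m
  refine ⟨ρ.ker, ρ.normal_ker, inferInstance, n, ⟨?_⟩⟩
  exact (MulEquiv.subgroupCongr (range_blockPiEmbedding N)).symm.trans <|
    (MonoidHom.ofInjective (blockPiEmbedding_injective N)).symm.trans <|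
      (MulEquiv.piCongrRight fun _ => eN).trans e

end Blocks

end UnrestrictedWreath

open UnrestrictedWreath

/-- If `H` is hyper-`B` and `U` is locally finite, then `H ≀^{f.v.} U` is hyper-`B`. -/
theorem isHyper_fvWreath {B H U : Type*} [Group B] [Group H] [Group U]
    (hH : IsHyper B H) (hU : ∀ T : Subgroup U, T.FG → Finite T) :
    IsHyper B (fvWreath H U) := by
  intro F
  let T := Subgroup.closure ((fun p : fvWreath H U => p.1.right) '' F)
  have : Finite T := hU T ((Subgroup.fg_iff _).2 ⟨_, rfl, F.finite_toSet.image _⟩)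
  have hvalues := F.finite_toSet.biUnion fun p _ => p.2
  obtain ⟨K, hvalues_le, hK⟩ := hH hvalues.toFinset
  obtain ⟨s, _, hs, hsF⟩ := Setoid.exists_isRightInvariant_of_finite_range
    (fun p : F => p.1.1.left) (fun p => p.1.2) T
  have hle : (blockSubgroup K s T hs).map (map K.subtype) ≤ fvWreath H U :=
    (blockSubgroup_map_le _).trans blockSubgroup_le_fvWreath
  refine ⟨_, fun p hp => ?_, (isVirtuallyPower_blockSubgroup hK).of_mulEquiv <|
    ((blockSubgroup K s T hs).equivMapOfInjective _ (map_injective K.subtype_injective)).trans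
      (Subgroup.subgroupOfEquivOfLe hle).symm⟩
  refine Subgroup.mem_subgroupOf.2 (mem_map_subtype_blockSubgroup
    (Subgroup.subset_closure ⟨p, hp, rfl⟩) (fun x => hvalues_le ?_) (hsF ⟨p, hp⟩))
  rw [Set.Finite.coe_toFinset]
  exact Set.mem_biUnion hp ⟨x, rfl⟩
end

section
/- Let G be a group acting on the right on a set X, let z ∈ X, and let (g_i)_{i∈ℕ} be a sequence in G that is parallelogram-free at z, i.e. z·(g_i⁻¹ g_j g_k⁻¹ g_ℓ) ≠ z whenever i ≠ j, j ≠ k, k ≠ ℓ and ℓ ≠ i. Then the sequence (z·g_i⁻¹)_{i∈ℕ} is rectifiable. -/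
/-!
With `x_i = z · g_i⁻¹`, the element `g_i g_j⁻¹` moves `x_i` to `x_j`, and a further coincidence
`x_k · g_i g_j⁻¹ = x_l` says `z · g_k⁻¹ g_i g_j⁻¹ g_l = z`. If `k ∉ {i, l}` this is a parallelogram,
unless `i = j` or `j = l`; in those cases it collapses to `z · g_k⁻¹ g_m = z` with `k ≠ m`, and
squaring gives the parallelogram `(k, m, k, m)`.
-/

/-- A sequence `(x_i)` in a set `X` with a right `G`-action `act` is *rectifiable* if
for all `i, j` there exists `g ∈ G` with `x_i · g = x_j` and `x_k · g ≠ x_ℓ` for all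
`k, ℓ` with `k ∉ {i, ℓ}`. -/
def Rectifiable {G X : Type*} [Group G] (act : X → G → X) (x : ℕ → X) : Prop :=
  ∀ i j : ℕ, ∃ g : G, act (x i) g = x j ∧
    ∀ k l : ℕ, act (x k) g = x l → k = i ∨ k = l

def ParallelogramFreeAt {G X : Type*} [Group G] (act : X → G → X) (z : X) (g : ℕ → G) : Prop :=
  ∀ i j k l : ℕ, i ≠ j → j ≠ k → k ≠ l → l ≠ i →
    act z ((g i)⁻¹ * g j * (g k)⁻¹ * g l) ≠ z

section RightAction

variable {G X : Type*} [Group G] {act : X → G → X}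

theorem act_mul_self_eq_of_act_eq
    (act_mul : ∀ (y : X) (g h : G), act (act y g) h = act y (g * h))
    {z : X} {a : G} (ha : act z a = z) : act z (a * a) = z := by
  rw [← act_mul, ha, ha]

theorem act_mul_eq_of_act_eq_act_inv (act_one : ∀ y : X, act y 1 = y)
    (act_mul : ∀ (y : X) (g h : G), act (act y g) h = act y (g * h))
    {y z : X} {a b : G} (h : act y a = act z b⁻¹) : act y (a * b) = z := by
  rw [← act_mul, h, act_mul, inv_mul_cancel, act_one]

namespace ParallelogramFreeAt

variable (act_mul : ∀ (y : X) (g h : G), act (act y g) h = act y (g * h))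
  {z : X} {g : ℕ → G}
include act_mul

theorem act_inv_mul_ne (hpf : ParallelogramFreeAt act z g) {k l : ℕ} (hkl : k ≠ l) :
    act z ((g k)⁻¹ * g l) ≠ z := fun h => by
  refine hpf k l k l hkl hkl.symm hkl hkl.symm ?_
  simpa only [mul_assoc] using act_mul_self_eq_of_act_eq act_mul h

theorem eq_or_eq_of_act_eq (hpf : ParallelogramFreeAt act z g) {i j k l : ℕ}
    (h : act z ((g k)⁻¹ * g i * (g j)⁻¹ * g l) = z) : k = i ∨ k = l := by
  by_contra! ⟨hki, hkl⟩
  rcases eq_or_ne i j with rfl | hij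
  · rw [mul_inv_cancel_right] at h
    exact hpf.act_inv_mul_ne act_mul hkl h
  rcases eq_or_ne j l with rfl | hjl
  · rw [inv_mul_cancel_right] at h
    exact hpf.act_inv_mul_ne act_mul hki h
  exact hpf k i j l hki hij hjl hkl.symm h

end ParallelogramFreeAt

end RightAction

/-- If `(g_i)` is parallelogram-free at `z`, then `(z · g_i⁻¹)` is rectifiable. -/
theorem rectifiable_of_parallelogramFree
    {G X : Type*} [Group G] (act : X → G → X)
    (act_one : ∀ y : X, act y 1 = y)
    (act_mul : ∀ (y : X) (g h : G), act (act y g) h = act y (g * h))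
    (z : X) (g : ℕ → G)
    (hpf : ∀ i j k l : ℕ, i ≠ j → j ≠ k → k ≠ l → l ≠ i →
      act z ((g i)⁻¹ * g j * (g k)⁻¹ * g l) ≠ z) :
    Rectifiable act (fun i => act z (g i)⁻¹) := by
  intro i j
  refine ⟨g i * (g j)⁻¹, by rw [act_mul, inv_mul_cancel_left], fun k l h => ?_⟩
  have hz := act_mul_eq_of_act_eq_act_inv act_one act_mul h
  rw [act_mul, ← mul_assoc, ← mul_assoc] at hz
  exact ParallelogramFreeAt.eq_or_eq_of_act_eq act_mul hpf hz
end

section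
/- Let G be a group acting on the right on a nonempty set X, and suppose G separates X. Then there exists a rectifiable sequence (x_i)_{i∈ℕ} in X. -/
open MulOpposite Pointwise

namespace MulAction

variable {H X : Type*} [Group H] [MulAction H X]

variable (H X) in
def Separates : Prop :=
  ∀ Y : Set X, Y.Finite → ∀ y ∉ Y, ∃ g : H, (∀ z ∈ Y, g • z = z) ∧ g • y ≠ y

theorem smul_notMem_of_forall_smul_eq {g : H} {x : X} {Y : Set X}
    (hfix : ∀ y ∈ Y, y ≠ x → g • y = y) (hx : g • x ≠ x) : g • x ∉ Y :=
  fun hmem => hx (smul_left_cancel g (hfix _ hmem hx))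

theorem Separates.exists_smul_notMem_insert (hsep : Separates H X) {Y : Set X} (hY : Y.Finite)
    (x : X) : ∃ g : H, (∀ y ∈ Y, y ≠ x → g • y = y) ∧ g • x ∉ insert x Y := by
  obtain ⟨g, hfix, hx⟩ := hsep (Y \ {x}) hY.sdiff x (fun h => h.2 rfl)
  have hfix' : ∀ y ∈ Y, y ≠ x → g • y = y := fun y hy hne => hfix y ⟨hy, hne⟩
  exact ⟨g, hfix', fun h => h.elim hx (smul_notMem_of_forall_smul_eq hfix' hx)⟩

/-- The conditions on the element `γ` appended to the elements `A` chosen so far. -/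
structure IsAdmissible (x₀ : X) (A : Set H) (γ : H) : Prop where
  smul_eq : ∀ w ∈ A * A⁻¹ * A, w • x₀ ≠ x₀ → γ • w • x₀ = w • x₀
  smul_ne_self : γ • x₀ ≠ x₀
  smul_ne_smul_inv : ∀ a ∈ A, γ • x₀ ≠ a • γ⁻¹ • x₀

/-- The family `(a • x₀)_{a ∈ A}` is rectified by the elements `b * a⁻¹`. -/
def IsRectifyingSet (x₀ : X) (A : Set H) : Prop :=
  ∀ a ∈ A, ∀ b ∈ A, ∀ c ∈ A, ∀ d ∈ A,
    (b * a⁻¹ * c) • x₀ = d • x₀ → c • x₀ = a • x₀ ∨ c • x₀ = d • x₀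

section Admissible

variable {x₀ : X} {A : Set H} {γ : H} {a b c d : H}

theorem mul_inv_mul_mem (ha : a ∈ A) (hb : b ∈ A) (hc : c ∈ A) : a * b⁻¹ * c ∈ A * A⁻¹ * A :=
  Set.mul_mem_mul (Set.mul_mem_mul ha (Set.inv_mem_inv.2 hb)) hc

theorem subset_mul_inv_mul (h1 : 1 ∈ A) : A ⊆ A * A⁻¹ * A := fun a ha => by
  simpa using mul_inv_mul_mem ha h1 h1

theorem Separates.exists_isAdmissible (hsep : Separates H X) (x₀ : X) (hA : A.Finite) :
    ∃ γ, IsAdmissible x₀ A γ := by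
  set W : Set X := (· • x₀) '' (A * A⁻¹ * A)
  have hW : W.Finite := ((hA.mul hA.inv).mul hA).image _
  obtain ⟨g, hg_fix, hu⟩ := hsep.exists_smul_notMem_insert hW x₀
  set P : Set X := (fun a => a • g⁻¹ • x₀) '' A
  have hWP : (insert x₀ W ∪ P).Finite := (hW.insert x₀).union (hA.image _)
  obtain ⟨c, hc_fix, hcu⟩ := hsep.exists_smul_notMem_insert hWP (g • x₀)
  have hc_fix' : ∀ y ∈ insert x₀ W, c • y = y := fun y hy =>
    hc_fix y (Or.inl hy) (fun h => hu (h ▸ hy))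
  refine ⟨c * g, fun w hw hne => ?_, fun h => ?_, fun a ha h => ?_⟩
  · rw [mul_smul, hg_fix _ ⟨w, hw, rfl⟩ hne, hc_fix' _ (Or.inr ⟨w, hw, rfl⟩)]
  · exact hcu (Or.inr (Or.inl (Or.inl (mul_smul c g x₀ ▸ h))))
  · have hinv : (c * g)⁻¹ • x₀ = g⁻¹ • x₀ := by
      rw [mul_inv_rev, mul_smul, inv_smul_eq_iff.2 (hc_fix' x₀ (Or.inl rfl)).symm]
    rw [hinv, mul_smul] at h
    exact hcu (Or.inr (Or.inr ⟨a, ha, h.symm⟩))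

namespace IsAdmissible

theorem smul_ne (hγ : IsAdmissible x₀ A γ) {w : H} (hw : w ∈ A * A⁻¹ * A) :
    γ • x₀ ≠ w • x₀ := fun h =>
  smul_notMem_of_forall_smul_eq (Y := (· • x₀) '' (A * A⁻¹ * A))
    (by rintro _ ⟨v, hv, rfl⟩; exact hγ.smul_eq v hv) hγ.smul_ne_self ⟨w, hw, h.symm⟩

theorem inv_smul_eq (hγ : IsAdmissible x₀ A γ) {w : H} (hw : w ∈ A * A⁻¹ * A)
    (hne : w • x₀ ≠ x₀) : γ⁻¹ • w • x₀ = w • x₀ :=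
  inv_smul_eq_iff.2 (hγ.smul_eq w hw hne).symm

theorem inv_smul_ne (hγ : IsAdmissible x₀ A γ) {w : H} (hw : w ∈ A * A⁻¹ * A) :
    γ⁻¹ • x₀ ≠ w • x₀ := fun h =>
  smul_notMem_of_forall_smul_eq (Y := (· • x₀) '' (A * A⁻¹ * A))
    (by rintro _ ⟨v, hv, rfl⟩; exact hγ.inv_smul_eq hv)
    (fun h' => hγ.smul_ne_self (inv_smul_eq_iff.1 h').symm) ⟨w, hw, h.symm⟩

theorem smul_eq_of_mul_inv_mul_self_smul_eq (hγ : IsAdmissible x₀ A γ) (h1 : 1 ∈ A)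
    (ha : a ∈ A) (hb : b ∈ insert γ A) (hd : d ∈ insert γ A)
    (h : (b * a⁻¹ * γ) • x₀ = d • x₀) : γ • x₀ = d • x₀ := by
  rcases hd with rfl | hd
  · rfl
  exfalso
  rcases hb with rfl | hb
  · rw [mul_smul, mul_smul] at h
    by_cases hd0 : d • x₀ = x₀
    · rw [hd0, ← eq_inv_smul_iff, inv_smul_eq_iff] at h
      exact hγ.smul_ne_smul_inv a ha h
    · rw [← hγ.smul_eq d (subset_mul_inv_mul h1 hd) hd0, smul_left_cancel_iff,
        inv_smul_eq_iff] at h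
      exact hγ.smul_ne (mul_inv_mul_mem ha h1 hd) (by simpa [mul_smul] using h)
  · refine hγ.smul_ne (mul_inv_mul_mem ha hb hd) ?_
    rw [mul_smul (a * b⁻¹), ← h]
    simp [mul_smul]

theorem smul_eq_or_of_self_mul_inv_mul_smul_eq (hγ : IsAdmissible x₀ A γ)
    (hA : IsRectifyingSet x₀ A) (h1 : 1 ∈ A) (ha : a ∈ A) (hc : c ∈ A) (hd : d ∈ insert γ A)
    (h : (γ * a⁻¹ * c) • x₀ = d • x₀) : c • x₀ = a • x₀ ∨ c • x₀ = d • x₀ := by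
  by_cases hac : (1 * a⁻¹ * c) • x₀ = x₀
  · left
    simpa [mul_smul, inv_smul_eq_iff] using hac
  have hw := mul_inv_mul_mem h1 ha hc
  rw [mul_assoc, mul_smul, ← one_mul (a⁻¹ * c), ← mul_assoc, hγ.smul_eq _ hw hac] at h
  rcases hd with rfl | hd
  · exact absurd h.symm (hγ.smul_ne hw)
  · exact hA a ha 1 h1 c hc d hd h

theorem smul_eq_of_mul_inv_self_mul_smul_eq (hγ : IsAdmissible x₀ A γ)
    (hA : IsRectifyingSet x₀ A) (h1 : 1 ∈ A) (hb : b ∈ A) (hc : c ∈ A) (hd : d ∈ insert γ A)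
    (h : (b * γ⁻¹ * c) • x₀ = d • x₀) : c • x₀ = d • x₀ := by
  by_cases hc0 : c • x₀ = x₀
  · exfalso
    rw [mul_smul, hc0, mul_smul] at h
    rcases hd with rfl | hd
    · exact hγ.smul_ne_smul_inv b hb h.symm
    · refine hγ.inv_smul_ne (mul_inv_mul_mem h1 hb hd) ?_
      simpa [mul_smul, eq_inv_smul_iff] using h
  rw [mul_smul, mul_smul, hγ.inv_smul_eq (subset_mul_inv_mul h1 hc) hc0, ← mul_smul] at h
  rcases hd with rfl | hd
  · exact absurd h.symm (hγ.smul_ne (by simpa using mul_inv_mul_mem hb h1 hc))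
  · have := hA 1 h1 b hb c hc d hd (by simpa using h)
    exact this.resolve_left (by simpa using hc0)

end IsAdmissible

theorem IsRectifyingSet.insert (hA : IsRectifyingSet x₀ A) (h1 : 1 ∈ A)
    (hγ : IsAdmissible x₀ A γ) : IsRectifyingSet x₀ (insert γ A) := by
  intro a ha b hb c hc d hd h
  rcases hc with rfl | hc
  · rcases ha with rfl | ha
    · exact Or.inl rfl
    · exact Or.inr (hγ.smul_eq_of_mul_inv_mul_self_smul_eq h1 ha hb hd h)
  rcases ha with rfl | ha
  · rcases hb with rfl | hb
    · exact Or.inr (by simpa using h)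
    · exact Or.inr (hγ.smul_eq_of_mul_inv_self_mul_smul_eq hA h1 hb hc hd h)
  rcases hb with rfl | hb
  · exact hγ.smul_eq_or_of_self_mul_inv_mul_smul_eq hA h1 ha hc hd h
  rcases hd with rfl | hd
  · exact absurd h.symm (hγ.smul_ne (mul_inv_mul_mem hb ha hc))
  · exact hA a ha b hb c hc d hd h

end Admissible

section Sequence

variable (H) in
noncomputable def admissibleSet (x₀ : X) : ℕ → Set H
  | 0 => {1}
  | n + 1 =>
    insert (Classical.epsilon (IsAdmissible x₀ (admissibleSet x₀ n))) (admissibleSet x₀ n)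

variable (H) in
noncomputable def admissibleSeq (x₀ : X) : ℕ → H
  | 0 => 1
  | n + 1 => Classical.epsilon (IsAdmissible x₀ (admissibleSet H x₀ n))

variable {x₀ : X}

theorem admissibleSet_finite (n : ℕ) : (admissibleSet H x₀ n).Finite := by
  induction n with
  | zero => exact Set.finite_singleton 1
  | succ n ih => exact ih.insert _

theorem one_mem_admissibleSet (n : ℕ) : (1 : H) ∈ admissibleSet H x₀ n := by
  induction n with
  | zero => exact rfl
  | succ n ih => exact Set.mem_insert_of_mem _ ih

theorem admissibleSeq_mem_admissibleSet {k n : ℕ} (hkn : k ≤ n) :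
    admissibleSeq H x₀ k ∈ admissibleSet H x₀ n := by
  refine monotone_nat_of_le_succ (f := admissibleSet H x₀) (fun _ => Set.subset_insert _ _)
    hkn ?_
  cases k with
  | zero => exact one_mem_admissibleSet 0
  | succ k => exact Set.mem_insert _ _

theorem Separates.isAdmissible_admissibleSeq_succ (hsep : Separates H X) (n : ℕ) :
    IsAdmissible x₀ (admissibleSet H x₀ n) (admissibleSeq H x₀ (n + 1)) :=
  Classical.epsilon_spec (hsep.exists_isAdmissible x₀ (admissibleSet_finite n))

theorem Separates.isRectifyingSet_admissibleSet (hsep : Separates H X) (n : ℕ) :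
    IsRectifyingSet x₀ (admissibleSet H x₀ n) := by
  induction n with
  | zero =>
    rintro a rfl b - c rfl d - -
    exact Or.inl rfl
  | succ n ih =>
    exact ih.insert (one_mem_admissibleSet n) (hsep.isAdmissible_admissibleSeq_succ n)

theorem Separates.injective_admissibleSeq_smul (hsep : Separates H X) :
    Function.Injective (admissibleSeq H x₀ · • x₀) := by
  refine .of_lt_imp_ne fun k m hkm h => ?_
  obtain ⟨n, rfl⟩ := Nat.exists_eq_add_one_of_ne_zero (Nat.ne_zero_of_lt hkm)
  refine (hsep.isAdmissible_admissibleSeq_succ n).smul_ne ?_ h.symm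
  exact subset_mul_inv_mul (one_mem_admissibleSet n)
    (admissibleSeq_mem_admissibleSet (Nat.le_of_lt_succ hkm))

theorem Separates.admissibleSeq_rectifies (hsep : Separates H X) {i j k l : ℕ}
    (h : (admissibleSeq H x₀ j * (admissibleSeq H x₀ i)⁻¹) • admissibleSeq H x₀ k • x₀ =
      admissibleSeq H x₀ l • x₀) : k = i ∨ k = l := by
  set n := max (max i j) (max k l)
  have hmem (m : ℕ) (hm : m ≤ n) : admissibleSeq H x₀ m ∈ admissibleSet H x₀ n :=
    admissibleSeq_mem_admissibleSet hm
  rw [← mul_smul] at h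
  exact (hsep.isRectifyingSet_admissibleSet n _ (hmem i (by omega)) _ (hmem j (by omega)) _
    (hmem k (by omega)) _ (hmem l (by omega)) h).imp (hsep.injective_admissibleSeq_smul ·)
    (hsep.injective_admissibleSeq_smul ·)

end Sequence

theorem Separates.exists_rectifiable {G : Type*} [Group G] [MulAction Gᵐᵒᵖ X] [Nonempty X]
    (hsep : Separates Gᵐᵒᵖ X) : ∃ x : ℕ → X, Rectifiable (fun y (g : G) => op g • y) x := by
  obtain ⟨x₀⟩ := ‹Nonempty X›
  set s := admissibleSeq Gᵐᵒᵖ x₀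
  refine ⟨(s · • x₀), fun i j => ⟨(s j * (s i)⁻¹).unop, ?_, fun k l h => ?_⟩⟩
  · simp [mul_smul]
  · exact hsep.admissibleSeq_rectifies h

end MulAction

/-- If a group `G` acting on a nonempty set `X` separates `X` (the fixator of any
finite subset moves any point outside it), then `X` contains a rectifiable sequence. -/
theorem exists_rectifiable_of_separating
    {G X : Type*} [Group G] [Nonempty X] (act : X → G → X)
    (act_one : ∀ y : X, act y 1 = y)
    (act_mul : ∀ (y : X) (g h : G), act (act y g) h = act y (g * h))
    (hsep : ∀ (Y : Finset X) (y₀ : X), y₀ ∉ Y →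
      ∃ g : G, (∀ y ∈ Y, act y g = y) ∧ act y₀ g ≠ y₀) :
    ∃ x : ℕ → X, Rectifiable act x := by
  let _ : MulAction Gᵐᵒᵖ X :=
    { smul := fun g y => act y g.unop
      one_smul := act_one
      mul_smul := fun g h y => (act_mul y h.unop g.unop).symm }
  refine MulAction.Separates.exists_rectifiable fun Y hY y hy => ?_
  obtain ⟨g, hg⟩ := hsep hY.toFinset y (by simpa using hy)
  exact ⟨op g, fun z hz => hg.1 z (hY.mem_toFinset.2 hz), hg.2⟩
end

section
/- Let f : ℕ → ℝ be a positive function that is sublinear, namely f(n)/n → 0 as n → ∞. Then there exists a function g : [0,∞) → ℝ that is concave on [0,∞), satisfies f(n) ≤ g(n) for all n ∈ ℕ, and is sublinear, i.e. g(x)/x → 0 as x → ∞. -/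
/-!
For every slope `c > 0` the sublinearity of `f` gives an intercept `b c` with
`f n ≤ b c + c * n` for all `n`. The lower envelope `g x = ⨅ c > 0, (b c + c * x)` of these lines
is concave as an infimum of affine functions, lies above `f`, and satisfies `g x / x ≤ b c / x + c`
for every `c > 0`, which makes it sublinear.
-/

open Filter Set Topology

theorem ConcaveOn.ciInf {ι E : Type*} [Nonempty ι] [AddCommMonoid E] [Module ℝ E] {s : Set E}
    {g : ι → E → ℝ} (hg : ∀ i, ConcaveOn ℝ s (g i))
    (hbdd : ∀ x ∈ s, BddBelow (range fun i => g i x)) :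
    ConcaveOn ℝ s fun x => ⨅ i, g i x := by
  refine ⟨(hg (Classical.arbitrary ι)).1, fun x hx y hy a b ha hb hab => le_ciInf fun i => ?_⟩
  calc a • (⨅ i, g i x) + b • (⨅ i, g i y) ≤ a • g i x + b • g i y :=
        add_le_add (smul_le_smul_of_nonneg_left (ciInf_le (hbdd x hx) i) ha)
          (smul_le_smul_of_nonneg_left (ciInf_le (hbdd y hy) i) hb)
    _ ≤ g i (a • x + b • y) := (hg i).2 hx hy ha hb hab

theorem tendsto_div_atTop_nhds_zero_of_le_add_mul {g : ℝ → ℝ} {m : ℝ}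
    (hlow : ∀ᶠ x in atTop, m ≤ g x) (hup : ∀ ε > 0, ∃ C, ∀ᶠ x in atTop, g x ≤ C + ε * x) :
    Tendsto (fun x => g x / x) atTop (𝓝 0) := by
  have hdiv : ∀ C : ℝ, Tendsto (fun x : ℝ => C / x) atTop (𝓝 0) := fun C =>
    tendsto_const_nhds.div_atTop tendsto_id
  refine tendsto_order.2 ⟨fun a ha => ?_, fun a ha => ?_⟩
  · filter_upwards [(hdiv m).eventually (lt_mem_nhds ha), hlow, eventually_gt_atTop 0]
      with x hax hmx hx
    exact hax.trans_le (div_le_div_of_nonneg_right hmx hx.le)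
  · obtain ⟨C, hC⟩ := hup (a / 2) (half_pos ha)
    filter_upwards [(hdiv C).eventually (gt_mem_nhds (half_pos ha)), hC, eventually_gt_atTop 0]
      with x hCx hgx hx
    calc g x / x ≤ (C + a / 2 * x) / x := div_le_div_of_nonneg_right hgx hx.le
      _ = C / x + a / 2 := by field_simp
      _ < a := by linarith

namespace SublinearMajorant

variable {f : ℕ → ℝ}

noncomputable def intercept (f : ℕ → ℝ) (c : ℝ) : ℝ := ⨆ n : ℕ, (f n - c * n)

noncomputable def envelope (f : ℕ → ℝ) (x : ℝ) : ℝ :=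
  ⨅ c : Ioi (0 : ℝ), (intercept f c + c * x)

variable (hf : Tendsto (fun n : ℕ => f n / n) atTop (𝓝 0))
include hf

theorem bddAbove_range_sub_mul {c : ℝ} (hc : 0 < c) :
    BddAbove (range fun n : ℕ => f n - c * n) := by
  refine IsBoundedUnder.bddAbove_range (isBoundedUnder_of_eventually_le (a := 0) ?_)
  filter_upwards [hf.eventually (gt_mem_nhds hc), eventually_gt_atTop 0] with n hn hn0
  rw [div_lt_iff₀ (Nat.cast_pos.2 hn0)] at hn
  linarith

theorem le_intercept_add_mul {c : ℝ} (hc : 0 < c) (n : ℕ) : f n ≤ intercept f c + c * n := by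
  have := le_ciSup (bddAbove_range_sub_mul hf hc) n
  rw [intercept]
  linarith

theorem apply_zero_le_intercept_add_mul {c x : ℝ} (hc : 0 < c) (hx : 0 ≤ x) :
    f 0 ≤ intercept f c + c * x := by
  have := le_intercept_add_mul hf hc 0
  push_cast at this
  linarith [mul_nonneg hc.le hx]

theorem bddBelow_range_affine {x : ℝ} (hx : 0 ≤ x) :
    BddBelow (range fun c : Ioi (0 : ℝ) => intercept f c + c * x) :=
  ⟨f 0, forall_mem_range.2 fun c => apply_zero_le_intercept_add_mul hf c.2 hx⟩

theorem concaveOn_envelope : ConcaveOn ℝ (Ici 0) (envelope f) :=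
  ConcaveOn.ciInf (fun c => (concaveOn_const _ (convex_Ici 0)).add
    ((concaveOn_id (convex_Ici 0)).smul c.2.le)) fun _ hx => bddBelow_range_affine hf hx

theorem le_envelope (n : ℕ) : f n ≤ envelope f n :=
  le_ciInf fun c => le_intercept_add_mul hf c.2 n

theorem tendsto_envelope_div : Tendsto (fun x => envelope f x / x) atTop (𝓝 0) := by
  refine tendsto_div_atTop_nhds_zero_of_le_add_mul (m := f 0) ?_ fun ε hε => ⟨intercept f ε, ?_⟩
  · filter_upwards [eventually_ge_atTop 0] with x hx
    exact le_ciInf fun c => apply_zero_le_intercept_add_mul hf c.2 hx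
  · filter_upwards [eventually_ge_atTop 0] with x hx
    exact ciInf_le (bddBelow_range_affine hf hx) ⟨ε, hε⟩

end SublinearMajorant

theorem exists_concave_sublinear_bound_general
    (f : ℕ → ℝ)
    (hsub : Tendsto (fun n : ℕ => f n / n) atTop (nhds 0)) :
    ∃ g : ℝ → ℝ, ConcaveOn ℝ (Set.Ici (0 : ℝ)) g ∧
      (∀ n : ℕ, f n ≤ g n) ∧
      Tendsto (fun x : ℝ => g x / x) atTop (nhds 0) :=
  ⟨SublinearMajorant.envelope f, SublinearMajorant.concaveOn_envelope hsub,
    SublinearMajorant.le_envelope hsub, SublinearMajorant.tendsto_envelope_div hsub⟩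

/-- Every positive sublinear function `f : ℕ → ℝ` is bounded from above by a concave
sublinear function on `[0,∞)`. -/
theorem exists_concave_sublinear_bound
    (f : ℕ → ℝ) (hpos : ∀ n : ℕ, 0 < f n)
    (hsub : Tendsto (fun n : ℕ => f n / n) atTop (nhds 0)) :
    ∃ g : ℝ → ℝ, ConcaveOn ℝ (Set.Ici (0 : ℝ)) g ∧
      (∀ n : ℕ, f n ≤ g n) ∧
      Tendsto (fun x : ℝ => g x / x) atTop (nhds 0) :=
  exists_concave_sublinear_bound_general f hsub
end

section
/- Let G be a group acting on the right on a set X, let (x_i)_{i∈ℕ} be a rectifiable sequence of pairwise distinct points of X, let B be a group, let (b_i)_{i∈ℕ} be a sequence in B, and let B₀ be the subgroup of B generated by {b_i : i ∈ ℕ}. Define f : X → B by f(x_i) = b_i for all i and f(x) = 1 for x ∉ {x_i : i ∈ ℕ}, and let W be the subgroup of the unrestricted permutational wreath product H^X ⋊ G (with H = B) generated by f and the copy of G. Let ι : B → B^X ⋊ G be the injective homomorphism sending b ∈ B to the pair (φ_b, 1) where φ_b(x₀) = b and φ_b(x) = 1 for x ≠ x₀. Then the derived subgroup [W,W] contains ι([B₀,B₀]).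 -/
/-- Given a right action `act` of `G` on `X`, the induced action of `G` on functions
`X → B` by `(g · φ) x = φ (x · g)`. -/
def wrAction {G X : Type*} [Group G] (B : Type*) [Group B] (act : X → G → X)
    (act_one : ∀ y : X, act y 1 = y)
    (act_mul : ∀ (y : X) (g h : G), act (act y g) h = act y (g * h)) :
    G →* MulAut (X → B) where
  toFun g :=
    { toFun := fun φ y => φ (act y g)
      invFun := fun φ y => φ (act y g⁻¹)
      left_inv := fun φ => funext fun y => by
        show φ (act (act y g⁻¹) g) = φ y
        rw [act_mul, inv_mul_cancel, act_one]
      right_inv := fun φ => funext fun y => by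
        show φ (act (act y g) g⁻¹) = φ y
        rw [act_mul, mul_inv_cancel, act_one]
      map_mul' := fun φ ψ => rfl }
  map_one' := by
    ext φ y
    show φ (act y 1) = φ y
    rw [act_one]
  map_mul' g h := by
    ext φ y
    show φ (act y (g * h)) = φ (act (act y g) h)
    rw [act_mul]

/-!
Conjugating `f` by an element of `G` that rectifies `x j` onto `x i` gives an element of `W`
with value `b i` at `x j` that commutes pointwise with `f` away from `x j`; products of such
elements realise every `u ∈ B₀` at `x j` in the same way. The commutator of such a realiser
with `f` is `⁅u, b j⁆` supported at `x j`, and `G` moves it to `x 0`. Finally, `⁅B₀, B₀⁆` lies in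
every subgroup that is normalised by `B₀` and contains all `⁅u, b j⁆` with `u ∈ B₀`, and the
realisers at `x 0` show that `ι⁻¹ ⁅W, W⁆` is normalised by `B₀`.
-/

open scoped commutatorElement

namespace Subgroup

variable {B : Type*} [Group B]

theorem conj_mem_commutator_self {W : Subgroup B} {v h : B} (hv : v ∈ W) (hh : h ∈ ⁅W, W⁆) :
    v * h * v⁻¹ ∈ ⁅W, W⁆ := by
  have key : v * h * v⁻¹ = ⁅v, h⁆ * h := by
    rw [commutatorElement_def]; group
  rw [key]
  exact mul_mem (commutator_mem_commutator hv (W.commutator_le_self hh)) hh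

theorem commutator_closure_le {s : Set B} {S : Subgroup B}
    (hconj : ∀ v ∈ closure s, ∀ c ∈ S, v * c * v⁻¹ ∈ S)
    (hgen : ∀ u ∈ closure s, ∀ t ∈ s, ⁅u, t⁆ ∈ S) :
    ⁅closure s, closure s⁆ ≤ S := by
  refine commutator_le.mpr fun u hu v hv => ?_
  induction hv using closure_induction with
  | mem t ht => exact hgen u hu t ht
  | one => simp
  | mul v₁ v₂ hv₁ _ ih₁ ih₂ =>
    have hid : ⁅u, v₁ * v₂⁆ = ⁅u, v₁⁆ * (v₁ * ⁅u, v₂⁆ * v₁⁻¹) := by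
      simp only [commutatorElement_def]; group
    rw [hid]
    exact mul_mem ih₁ (hconj v₁ hv₁ _ ih₂)
  | inv v hv ih =>
    have hid : ⁅u, v⁻¹⁆ = v⁻¹ * ⁅u, v⁆⁻¹ * v⁻¹⁻¹ := by
      simp only [commutatorElement_def]; group
    rw [hid]
    exact hconj _ (inv_mem hv) _ (inv_mem ih)

end Subgroup

namespace Pi

variable {X B : Type*} [DecidableEq X] [Group B]

theorem commutatorElement_eq_mulSingle {A F : X → B} {y₀ : X}
    (h : ∀ y ≠ y₀, Commute (A y) (F y)) : ⁅A, F⁆ = mulSingle y₀ ⁅A y₀, F y₀⁆ := by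
  funext y
  by_cases hy : y = y₀
  · subst hy; rw [mulSingle_eq_same]; rfl
  · rw [mulSingle_eq_of_ne hy]
    exact commutatorElement_eq_one_iff_commute.mpr (h y hy)

theorem mul_mulSingle_mul_inv (A : X → B) (y : X) (c : B) :
    A * mulSingle y c * A⁻¹ = mulSingle y (A y * c * (A y)⁻¹) := by
  funext z
  by_cases hz : z = y
  · subst hz; simp
  · simp [mulSingle_eq_of_ne hz]

end Pi

theorem rightAction_injective {G X : Type*} [Group G] {act : X → G → X}
    (act_one : ∀ y : X, act y 1 = y)
    (act_mul : ∀ (y : X) (g h : G), act (act y g) h = act y (g * h)) (g : G) :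
    Function.Injective (act · g) := by
  intro y z h
  simpa [act_mul, act_one] using congrArg (act · g⁻¹) h

namespace wrAction

variable {G X B : Type*} [Group G] [Group B] {act : X → G → X}
  {act_one : ∀ y : X, act y 1 = y}
  {act_mul : ∀ (y : X) (g h : G), act (act y g) h = act y (g * h)}

@[simp]
theorem apply_apply (g : G) (φ : X → B) (y : X) :
    wrAction B act act_one act_mul g φ y = φ (act y g) := rfl

theorem apply_mulSingle [DecidableEq X] {g : G} {y₀ y₁ : X} (hg : act y₀ g = y₁) (c : B) :
    wrAction B act act_one act_mul g (Pi.mulSingle y₁ c) = Pi.mulSingle y₀ c := by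
  funext y
  by_cases hy : y = y₀
  · simp [hy, hg]
  · have : act y g ≠ y₁ := fun h =>
      hy (rightAction_injective act_one act_mul g (h.trans hg.symm))
    simp [Pi.mulSingle_eq_of_ne hy, Pi.mulSingle_eq_of_ne this]

theorem commute_apply_of_rectifiable {x : ℕ → X} {f : X → B} {g : G} {j : ℕ}
    (hsep : ∀ k l : ℕ, act (x k) g = x l → k = j ∨ k = l)
    (hf : ∀ y : X, y ∉ Set.range x → f y = 1) :
    ∀ y ≠ x j, Commute (wrAction B act act_one act_mul g f y) (f y) := by
  intro y hy
  by_cases hyx : y ∈ Set.range x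
  · obtain ⟨k, rfl⟩ := hyx
    by_cases hk : act (x k) g ∈ Set.range x
    · obtain ⟨l, hl⟩ := hk
      rcases hsep k l hl.symm with rfl | rfl
      · exact absurd rfl hy
      · rw [apply_apply, ← hl]
    · rw [apply_apply, hf _ hk]
      exact Commute.one_left _
  · rw [hf y hyx]
    exact Commute.one_right _

end wrAction

section

variable {G X B : Type*} [Group G] [Group B] {act : X → G → X}
  {act_one : ∀ y : X, act y 1 = y}
  {act_mul : ∀ (y : X) (g h : G), act (act y g) h = act y (g * h)}
  {W : Subgroup (SemidirectProduct (X → B) G (wrAction B act act_one act_mul))}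

theorem inl_mulSingle_mem_commutator_of_act [DecidableEq X] {g : G} {y₀ y₁ : X} {c : B}
    (hgW : SemidirectProduct.inr g ∈ W) (hg : act y₀ g = y₁)
    (h : SemidirectProduct.inl (Pi.mulSingle y₁ c) ∈ ⁅W, W⁆) :
    SemidirectProduct.inl (Pi.mulSingle y₀ c) ∈ ⁅W, W⁆ := by
  rw [← wrAction.apply_mulSingle (act_one := act_one) (act_mul := act_mul) hg,
    SemidirectProduct.inl_aut, map_inv]
  exact Subgroup.conj_mem_commutator_self hgW h

theorem inl_mulSingle_conj_mem_commutator [DecidableEq X] {A : X → B} {y : X} {c : B}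
    (hA : SemidirectProduct.inl A ∈ W)
    (h : SemidirectProduct.inl (Pi.mulSingle y c) ∈ ⁅W, W⁆) :
    SemidirectProduct.inl (Pi.mulSingle y (A y * c * (A y)⁻¹)) ∈ ⁅W, W⁆ := by
  rw [← Pi.mul_mulSingle_mul_inv, map_mul, map_mul, map_inv]
  exact Subgroup.conj_mem_commutator_self hA h

theorem exists_inl_mem_apply_eq_of_mem_closure {x : ℕ → X} {b : ℕ → B} {f : X → B}
    (hrect : Rectifiable act x) (hf₁ : ∀ i : ℕ, f (x i) = b i)
    (hf₂ : ∀ y : X, y ∉ Set.range x → f y = 1)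
    (hfW : SemidirectProduct.inl f ∈ W) (hGW : ∀ g : G, SemidirectProduct.inr g ∈ W)
    (j : ℕ) {u : B} (hu : u ∈ Subgroup.closure (Set.range b)) :
    ∃ A : X → B, SemidirectProduct.inl A ∈ W ∧ A (x j) = u ∧
      ∀ y ≠ x j, Commute (A y) (f y) := by
  let R : Subgroup (X → B) := W.comap SemidirectProduct.inl ⊓
    Subgroup.pi {x j}ᶜ fun y => Subgroup.centralizer {f y}
  have hR : Subgroup.closure (Set.range b) ≤ R.map (Pi.evalMonoidHom _ (x j)) := by
    refine (Subgroup.closure_le _).mpr (Set.range_subset_iff.mpr fun i => ?_)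
    obtain ⟨g, hg, hsep⟩ := hrect j i
    refine ⟨wrAction B act act_one act_mul g f, ⟨?_, fun y hy => ?_⟩, by simp [hg, hf₁]⟩
    · show SemidirectProduct.inl _ ∈ W
      rw [SemidirectProduct.inl_aut]
      exact mul_mem (mul_mem (hGW g) hfW) (hGW g⁻¹)
    · exact Subgroup.mem_centralizer_singleton_iff.mpr
        (wrAction.commute_apply_of_rectifiable hsep hf₂ y hy)
  obtain ⟨A, ⟨hAW, hAf⟩, rfl⟩ := hR hu
  exact ⟨A, hAW, rfl, fun y hy => Subgroup.mem_centralizer_singleton_iff.mp (hAf y hy)⟩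

theorem inl_mulSingle_commutator_mem_commutator [DecidableEq X] {x : ℕ → X} {b : ℕ → B}
    {f : X → B} (hrect : Rectifiable act x) (hf₁ : ∀ i : ℕ, f (x i) = b i)
    (hf₂ : ∀ y : X, y ∉ Set.range x → f y = 1)
    (hfW : SemidirectProduct.inl f ∈ W) (hGW : ∀ g : G, SemidirectProduct.inr g ∈ W)
    (j : ℕ) {u : B} (hu : u ∈ Subgroup.closure (Set.range b)) :
    SemidirectProduct.inl (Pi.mulSingle (x j) ⁅u, b j⁆) ∈ ⁅W, W⁆ := by
  obtain ⟨A, hAW, hAj, hAf⟩ :=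
    exists_inl_mem_apply_eq_of_mem_closure hrect hf₁ hf₂ hfW hGW j hu
  rw [← hAj, ← hf₁, ← Pi.commutatorElement_eq_mulSingle hAf, map_commutatorElement]
  exact Subgroup.commutator_mem_commutator hAW hfW

end

theorem derived_subgroup_contains_general
    {G X B : Type} [Group G] [Group B] [DecidableEq X]
    (act : X → G → X)
    (act_one : ∀ y : X, act y 1 = y)
    (act_mul : ∀ (y : X) (g h : G), act (act y g) h = act y (g * h))
    (x : ℕ → X)
    (hrect : Rectifiable act x)
    (b : ℕ → B) (f : X → B)
    (hf₁ : ∀ i : ℕ, f (x i) = b i)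
    (hf₂ : ∀ y : X, y ∉ Set.range x → f y = 1)
    (W : Subgroup (SemidirectProduct (X → B) G (wrAction B act act_one act_mul)))
    (hW : W = Subgroup.closure
      ({SemidirectProduct.inl f} ∪
        Set.range (⇑(SemidirectProduct.inr (φ := wrAction B act act_one act_mul))))) :
    ∀ w ∈ ⁅Subgroup.closure (Set.range b), Subgroup.closure (Set.range b)⁆,
      SemidirectProduct.inl (Pi.mulSingle (x 0) w) ∈ ⁅W, W⁆ := by
  have hfW : SemidirectProduct.inl f ∈ W := hW ▸ Subgroup.subset_closure (Or.inl rfl)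
  have hGW (g : G) : SemidirectProduct.inr g ∈ W :=
    hW ▸ Subgroup.subset_closure (Or.inr ⟨g, rfl⟩)
  let ι := (SemidirectProduct.inl (φ := wrAction B act act_one act_mul)).comp
    (MonoidHom.mulSingle _ (x 0))
  suffices h : ⁅Subgroup.closure (Set.range b), Subgroup.closure (Set.range b)⁆ ≤
      ⁅W, W⁆.comap ι from fun w hw => h hw
  refine Subgroup.commutator_closure_le (fun v hv c hc => ?_) ?_
  · obtain ⟨A, hAW, hA0, -⟩ :=
      exists_inl_mem_apply_eq_of_mem_closure hrect hf₁ hf₂ hfW hGW 0 hv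
    rw [← hA0]
    exact inl_mulSingle_conj_mem_commutator hAW hc
  · rintro u hu _ ⟨j, rfl⟩
    obtain ⟨g, hg, -⟩ := hrect 0 j
    exact inl_mulSingle_mem_commutator_of_act (hGW g) hg
      (inl_mulSingle_commutator_mem_commutator hrect hf₁ hf₂ hfW hGW j hu)

/-- Lemma 6.1: if `(x_i)` is a rectifiable sequence of pairwise distinct points,
`(b_i)` a sequence in `B` generating the subgroup `B₀`, and `f : X → B` the function
with `f (x i) = b i` and trivial values off the sequence, then the derived subgroup of
`W = ⟨G, f⟩ ≤ B^X ⋊ G` contains `ι([B₀, B₀])`, where `ι b` is the function supported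
at `x 0` with value `b` there. -/
theorem derived_subgroup_contains
    {G X B : Type} [Group G] [Group B] [DecidableEq X]
    (act : X → G → X)
    (act_one : ∀ y : X, act y 1 = y)
    (act_mul : ∀ (y : X) (g h : G), act (act y g) h = act y (g * h))
    (x : ℕ → X) (hx : Function.Injective x)
    (hrect : Rectifiable act x)
    (b : ℕ → B) (f : X → B)
    (hf₁ : ∀ i : ℕ, f (x i) = b i)
    (hf₂ : ∀ y : X, y ∉ Set.range x → f y = 1)
    (W : Subgroup (SemidirectProduct (X → B) G (wrAction B act act_one act_mul)))
    (hW : W = Subgroup.closure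
      ({SemidirectProduct.inl f} ∪
        Set.range (⇑(SemidirectProduct.inr (φ := wrAction B act act_one act_mul))))) :
    ∀ w ∈ ⁅Subgroup.closure (Set.range b), Subgroup.closure (Set.range b)⁆,
      SemidirectProduct.inl (Pi.mulSingle (x 0) w) ∈ ⁅W, W⁆ :=
  derived_subgroup_contains_general act act_one act_mul x hrect b f hf₁ hf₂ W hW
end
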